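/- Koksma's inequality: for any function f : [0,1] → ℝ of bounded variation V(f) and any points x_1,...,x_k ∈ [0,1], the integration error satisfies | (1/k)∑_{i=1}^k f(x_i) − ∫_0^1 f(u) du | ≤ V(f) · D_k(x), where D_k(x) is the star discrepancy of the point set. -/

import Mathlib

/-!
Jordan decomposition writes `f = p - q` on `[0, 1]` with `p`, `q` monotone and
`(p 1 - p 0) + (q 1 - q 0) = V(f)`, so it suffices to treat a monotone `g`. The point average and
the integral are the integrals of `g` against two probability measures on `[0, 1]`: the empirical
measure of the points and Lebesgue measure. By the layer-cake formula their difference is the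
integral over `t ∈ (0, g 1 - g 0]` of the difference of the two measures of the superlevel set
`{g - g 0 ≥ t}`, an upper set. On `[0, 1]` the complement of an upper set is `[0, c)` or
`[0, c]`; the first has discrepancy at most `D_k(x)` by definition, the second by approximating
it from the right by `[0, u)`.
-/

open MeasureTheory Set
open scoped ENNReal

theorem IsLowerSet.exists_inter_Icc_eq {α : Type*} [ConditionallyCompleteLinearOrder α]
    {T : Set α} (hT : IsLowerSet T) {a b : α} (hab : a ≤ b) :
    ∃ c ∈ Icc a b, T ∩ Icc a b = Iio c ∩ Icc a b ∨ T ∩ Icc a b = Iic c ∩ Icc a b := by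
  rcases (T ∩ Icc a b).eq_empty_or_nonempty with hempty | hne
  · refine ⟨a, left_mem_Icc.2 hab, Or.inl ?_⟩
    rw [hempty, eq_comm, eq_empty_iff_forall_notMem]
    exact fun u hu => not_le.2 hu.1 hu.2.1
  have hbdd : BddAbove (T ∩ Icc a b) := ⟨b, fun u hu => hu.2.2⟩
  have hle : ∀ u ∈ T ∩ Icc a b, u ≤ sSup (T ∩ Icc a b) := fun u hu => le_csSup hbdd hu
  have hlt : ∀ u < sSup (T ∩ Icc a b), u ∈ T := fun u hu => by
    obtain ⟨v, hv, huv⟩ := exists_lt_of_lt_csSup hne hu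
    exact hT huv.le hv.1
  refine ⟨sSup (T ∩ Icc a b), ⟨hne.some_mem.2.1.trans (hle _ hne.some_mem),
    csSup_le hne fun u hu => hu.2.2⟩, ?_⟩
  by_cases hsup : sSup (T ∩ Icc a b) ∈ T
  · exact Or.inr <| Set.ext fun u =>
      ⟨fun hu => ⟨hle u hu, hu.2⟩, fun hu => ⟨hT hu.1 hsup, hu.2⟩⟩
  · exact Or.inl <| Set.ext fun u =>
      ⟨fun hu => ⟨(hle u hu).lt_of_ne fun h => hsup (h ▸ hu.1), hu.2⟩,
        fun hu => ⟨hlt u hu.1, hu.2⟩⟩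

theorem measureReal_eq_of_inter_eq {α : Type*} [MeasurableSpace α] {μ : Measure α}
    {I s t : Set α} (hI : ∀ᵐ u ∂μ, u ∈ I) (hst : s ∩ I = t ∩ I) : μ.real s = μ.real t := by
  have hI' : I =ᵐ[μ] univ := ae_eq_univ.2 hI
  calc μ.real s = μ.real (s ∩ I) := measureReal_congr (inter_ae_eq_left_of_ae_eq_univ hI').symm
    _ = μ.real t := by rw [hst]; exact measureReal_congr (inter_ae_eq_left_of_ae_eq_univ hI')

instance : IsProbabilityMeasure (volume.restrict (Icc (0:ℝ) 1)) := ⟨by simp⟩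

section Monotone

variable {μ ν : Measure ℝ} {a b : ℝ} {g : ℝ → ℝ}

theorem Monotone.integrable_of_ae_mem_Icc [IsFiniteMeasure μ] (hg : Monotone g)
    (hμ : ∀ᵐ u ∂μ, u ∈ Icc a b) : Integrable g μ :=
  .of_bound hg.measurable.aestronglyMeasurable (max |g a| |g b|) <| by
    filter_upwards [hμ] with u hu using abs_le_max_abs_abs (hg hu.1) (hg hu.2)

theorem Monotone.integral_sub_eq_integral_measureReal_le [IsProbabilityMeasure μ]
    (hg : Monotone g) (hμ : ∀ᵐ u ∂μ, u ∈ Icc a b) :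
    ∫ u, g u ∂μ - g a = ∫ t in Ioc 0 (g b - g a), μ.real {u | t ≤ g u - g a} := by
  have hint : Integrable (fun u => g u - g a) μ :=
    (hg.integrable_of_ae_mem_Icc hμ).sub (integrable_const (g a))
  rw [← hint.integral_eq_integral_Ioc_meas_le, integral_sub (hg.integrable_of_ae_mem_Icc hμ)
    (integrable_const _), integral_const, probReal_univ, one_smul]
  · filter_upwards [hμ] with u hu using sub_nonneg.2 (hg hu.1)
  · filter_upwards [hμ] with u hu using sub_le_sub_right (hg hu.2) _

theorem Monotone.abs_integral_sub_integral_le [IsProbabilityMeasure μ] [IsProbabilityMeasure ν]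
    (hg : Monotone g) (hμ : ∀ᵐ u ∂μ, u ∈ Icc a b) (hν : ∀ᵐ u ∂ν, u ∈ Icc a b) {D : ℝ}
    (hD : ∀ S : Set ℝ, IsUpperSet S → |μ.real S - ν.real S| ≤ D) :
    |∫ u, g u ∂μ - ∫ u, g u ∂ν| ≤ (g b - g a) * D := by
  have hab : a ≤ b := by
    obtain ⟨u, hu⟩ := hμ.exists
    exact hu.1.trans hu.2
  have hS (t : ℝ) : IsUpperSet {u | t ≤ g u - g a} := fun u v huv hu =>
    hu.trans (sub_le_sub_right (hg huv) _)
  have hint (ρ : Measure ℝ) [IsFiniteMeasure ρ] :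
      IntegrableOn (fun t => ρ.real {u | t ≤ g u - g a}) (Ioc 0 (g b - g a)) := by
    have hanti : Antitone fun t => ρ.real {u | t ≤ g u - g a} := fun s t hst =>
      measureReal_mono fun u hu => hst.trans hu
    exact (hanti.locallyIntegrable.integrableOn_isCompact isCompact_Icc).mono_set
      Ioc_subset_Icc_self
  have hsplit : ∫ u, g u ∂μ - ∫ u, g u ∂ν =
      ∫ t in Ioc 0 (g b - g a), (μ.real {u | t ≤ g u - g a} - ν.real {u | t ≤ g u - g a}) := by
    rw [integral_sub (hint μ) (hint ν), ← hg.integral_sub_eq_integral_measureReal_le hμ,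
      ← hg.integral_sub_eq_integral_measureReal_le hν]
    ring
  calc |∫ u, g u ∂μ - ∫ u, g u ∂ν|
      ≤ D * volume.real (Ioc 0 (g b - g a)) := by
        rw [hsplit, ← Real.norm_eq_abs]
        exact norm_setIntegral_le_of_norm_le_const measure_Ioc_lt_top fun t _ => hD _ (hS t)
    _ = (g b - g a) * D := by
        rw [Real.volume_real_Ioc_of_le (sub_nonneg.2 (hg hab)), sub_zero, mul_comm]

end Monotone

section Empirical

variable {k : ℕ} (x : Fin k → ℝ)

noncomputable def empiricalMeasure : Measure ℝ :=
  (k : ℝ≥0∞)⁻¹ • ∑ i, Measure.dirac (x i)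

theorem empiricalMeasure_apply (S : Set ℝ) :
    empiricalMeasure x S = (k : ℝ≥0∞)⁻¹ * Nat.card {i // x i ∈ S} := by
  classical
  simp [empiricalMeasure, Measure.finsetSum_apply, Measure.dirac_apply, Set.indicator_apply,
    Fintype.card_subtype, Finset.sum_boole]

theorem measureReal_empiricalMeasure (S : Set ℝ) :
    (empiricalMeasure x).real S = Nat.card {i // x i ∈ S} / k := by
  simp [measureReal_def, empiricalMeasure_apply, div_eq_inv_mul]

theorem isProbabilityMeasure_empiricalMeasure (hk : k ≠ 0) :
    IsProbabilityMeasure (empiricalMeasure x) :=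
  ⟨by simp [empiricalMeasure_apply, ENNReal.inv_mul_cancel, hk]⟩

theorem ae_empiricalMeasure_mem {s : Set ℝ} (hx : ∀ i, x i ∈ s) :
    ∀ᵐ u ∂empiricalMeasure x, u ∈ s := by
  simp [ae_iff, empiricalMeasure_apply, hx]

theorem integral_empiricalMeasure (g : ℝ → ℝ) :
    ∫ u, g u ∂empiricalMeasure x = (k : ℝ)⁻¹ * ∑ i, g (x i) := by
  rw [empiricalMeasure, integral_smul_measure, integral_finsetSum_measure fun i _ =>
    integrable_dirac enorm_lt_top]
  simp [integral_dirac]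

end Empirical

section Discrepancy

variable {k : ℕ} (x : Fin k → ℝ)

noncomputable def starDiscrepancy : ℝ :=
  ⨆ u : Icc (0:ℝ) 1, |(Nat.card {i : Fin k // x i < (u : ℝ)} : ℝ) / k - (u : ℝ)|

theorem abs_measureReal_Iio_sub_le_starDiscrepancy {c : ℝ} (hc : c ∈ Icc 0 1) :
    |(empiricalMeasure x).real (Iio c) - c| ≤ starDiscrepancy x := by
  rw [measureReal_empiricalMeasure]
  refine le_ciSup (f := fun u : Icc (0:ℝ) 1 => |(Nat.card {i // x i < (u : ℝ)} : ℝ) / k - u|)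
    ⟨1, ?_⟩ ⟨c, hc⟩
  rintro _ ⟨⟨u, hu⟩, rfl⟩
  have hcard : (Nat.card {i // x i < u} : ℝ) / k ≤ 1 :=
    div_le_one_of_le₀ (mod_cast (Finite.card_subtype_le _).trans (Nat.card_fin k).le)
      k.cast_nonneg
  have : 0 ≤ (Nat.card {i // x i < u} : ℝ) / k := by positivity
  exact abs_sub_le_iff.2 ⟨by linarith [hu.1], by linarith [hu.2]⟩

theorem abs_measureReal_Iic_sub_le_starDiscrepancy (hk : k ≠ 0) {c : ℝ}
    (hc : c ∈ Icc 0 1) :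
    |(empiricalMeasure x).real (Iic c) - c| ≤ starDiscrepancy x := by
  have := isProbabilityMeasure_empiricalMeasure x hk
  have hIio := abs_le.1 (abs_measureReal_Iio_sub_le_starDiscrepancy x hc)
  refine abs_le.2 ⟨?_, ?_⟩
  · linarith [measureReal_mono (μ := empiricalMeasure x) Iio_subset_Iic_self]
  rcases hc.2.eq_or_lt with rfl | hc1
  · have hD := (abs_nonneg _).trans (abs_measureReal_Iio_sub_le_starDiscrepancy x
      (left_mem_Icc.2 zero_le_one))
    linarith [measureReal_le_one (μ := empiricalMeasure x) (s := Iic 1)]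
  refine le_of_forall_pos_le_add fun ε hε => ?_
  have hu : min (c + ε) 1 ∈ Icc 0 1 := ⟨le_min (by linarith [hc.1]) zero_le_one, min_le_right _ _⟩
  have hcu : c < min (c + ε) 1 := lt_min (by linarith) hc1
  have hIio' := abs_le.1 (abs_measureReal_Iio_sub_le_starDiscrepancy x hu)
  linarith [measureReal_mono (μ := empiricalMeasure x) (Iic_subset_Iio.2 hcu),
    min_le_left (c + ε) 1]

theorem abs_measureReal_sub_le_starDiscrepancy_of_isUpperSet (hk : k ≠ 0)
    (hx : ∀ i, x i ∈ Icc 0 1) {S : Set ℝ} (hS : IsUpperSet S) :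
    |(empiricalMeasure x).real S - (volume.restrict (Icc 0 1)).real S| ≤ starDiscrepancy x := by
  have := isProbabilityMeasure_empiricalMeasure x hk
  have hemp {s t : Set ℝ} (h : s ∩ Icc 0 1 = t ∩ Icc 0 1) :=
    measureReal_eq_of_inter_eq (ae_empiricalMeasure_mem x hx) h
  have hvol {s t : Set ℝ} (h : s ∩ Icc 0 1 = t ∩ Icc 0 1) :=
    measureReal_eq_of_inter_eq (μ := volume.restrict (Icc 0 1))
      (ae_restrict_mem measurableSet_Icc) h
  have hcompl : (empiricalMeasure x).real S - (volume.restrict (Icc 0 1)).real S =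
      -((empiricalMeasure x).real Sᶜ - (volume.restrict (Icc 0 1)).real Sᶜ) := by
    rw [measureReal_compl hS.ordConnected.measurableSet,
      measureReal_compl hS.ordConnected.measurableSet, probReal_univ, probReal_univ]
    ring
  rw [hcompl, abs_neg]
  obtain ⟨c, hc, hT | hT⟩ := hS.compl.exists_inter_Icc_eq zero_le_one
  · have hIco : Iio c ∩ Icc (0:ℝ) 1 = Ico 0 c := by
      ext u; simp only [mem_inter_iff, mem_Iio, mem_Icc, mem_Ico]; grind
    rw [hemp hT, hvol hT, measureReal_restrict_apply measurableSet_Iio, hIco,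
      Real.volume_real_Ico_of_le hc.1, sub_zero]
    exact abs_measureReal_Iio_sub_le_starDiscrepancy x hc
  · have hIcc : Iic c ∩ Icc (0:ℝ) 1 = Icc 0 c := by
      ext u; simp only [mem_inter_iff, mem_Iic, mem_Icc]; grind
    rw [hemp hT, hvol hT, measureReal_restrict_apply measurableSet_Iic, hIcc,
      Real.volume_real_Icc_of_le hc.1, sub_zero]
    exact abs_measureReal_Iic_sub_le_starDiscrepancy x hk hc

theorem MonotoneOn.abs_average_sub_integral_le (hk : k ≠ 0) (hx : ∀ i, x i ∈ Icc 0 1)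
    {g : ℝ → ℝ} (hg : MonotoneOn g (Icc 0 1)) :
    |(k : ℝ)⁻¹ * ∑ i, g (x i) - ∫ u in (0:ℝ)..1, g u| ≤ (g 1 - g 0) * starDiscrepancy x := by
  obtain ⟨G, hG, hgG⟩ := hg.exists_monotone_extension (bddBelow_Icc.mono hg.image_Icc_subset)
    (bddAbove_Icc.mono hg.image_Icc_subset)
  have := isProbabilityMeasure_empiricalMeasure x hk
  have hsum : ∑ i, g (x i) = ∑ i, G (x i) := Finset.sum_congr rfl fun i _ => hgG (hx i)
  have hint : ∫ u in (0:ℝ)..1, g u = ∫ u in Icc 0 1, G u := by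
    rw [intervalIntegral.integral_of_le zero_le_one, integral_Icc_eq_integral_Ioc]
    exact setIntegral_congr_fun measurableSet_Ioc fun u hu => hgG (Ioc_subset_Icc_self hu)
  rw [hsum, hint, ← integral_empiricalMeasure, hgG (left_mem_Icc.2 zero_le_one),
    hgG (right_mem_Icc.2 zero_le_one)]
  exact hG.abs_integral_sub_integral_le (ae_empiricalMeasure_mem x hx)
    (ae_restrict_mem measurableSet_Icc) fun S hS =>
      abs_measureReal_sub_le_starDiscrepancy_of_isUpperSet x hk hx hS

end Discrepancy

/-- Koksma's inequality: for any `f : [0,1] → ℝ` of bounded variation `V(f)` and points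
`x 1, …, x k ∈ [0,1]`, `|(1/k) ∑ i, f (x i) − ∫_0^1 f| ≤ V(f) · D_k(x)`, where `D_k(x)`
is the star discrepancy `sup_{u ∈ [0,1]} |#{i : x i < u}/k − u|`. -/
theorem koksma_inequality (k : ℕ) (hk : 0 < k) (f : ℝ → ℝ)
    (hf : BoundedVariationOn f (Set.Icc 0 1))
    (x : Fin k → ℝ) (hx : ∀ i, x i ∈ Set.Icc (0:ℝ) 1) :
    |(1 / (k : ℝ)) * ∑ i, f (x i) - ∫ u in (0:ℝ)..1, f u|
      ≤ (eVariationOn f (Set.Icc 0 1)).toReal *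
        ⨆ u : Set.Icc (0:ℝ) 1,
          |(Nat.card {i : Fin k // x i < (u : ℝ)} : ℝ) / k - (u : ℝ)| := by
  obtain ⟨p, q, hp, hq, rfl, hpq⟩ :=
    hf.locallyBoundedVariationOn.exists_monotoneOn_sub_monotoneOn'
  have hvar : (eVariationOn (p - q) (Icc 0 1)).toReal = (p 1 - p 0) + (q 1 - q 0) := by
    rw [hpq 0 (left_mem_Icc.2 zero_le_one) 1 (right_mem_Icc.2 zero_le_one), variationOnFromTo.eq_of_le _ _ zero_le_one, inter_self]
  have hint (g : ℝ → ℝ) (hg : MonotoneOn g (Icc 0 1)) : IntervalIntegrable g volume 0 1 :=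
    MonotoneOn.intervalIntegrable (by rwa [uIcc_of_le zero_le_one])
  have hsplit : (1 / (k : ℝ)) * ∑ i, (p - q) (x i) - ∫ u in (0:ℝ)..1, (p - q) u =
      ((k : ℝ)⁻¹ * ∑ i, p (x i) - ∫ u in (0:ℝ)..1, p u) -
        ((k : ℝ)⁻¹ * ∑ i, q (x i) - ∫ u in (0:ℝ)..1, q u) := by
    simp only [Pi.sub_apply, Finset.sum_sub_distrib,
      intervalIntegral.integral_sub (hint p hp) (hint q hq)]
    ring
  rw [hsplit, hvar, add_mul]
  exact (abs_sub _ _).trans (add_le_add (hp.abs_average_sub_integral_le x hk.ne' hx)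
    (hq.abs_average_sub_integral_le x hk.ne' hx))
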